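/- Let $\Pi_1$ and $\Pi_2$ be probability measures on a measurable space with densities proportional to positive integrable functions $g$ and $g^\infty$ respectively, both supported on a common measurable set $B_R$ on which both normalizing constants are positive. Then the total variation distance between $\Pi_1$ and $\Pi_2$ satisfies $\|\Pi_1 - \Pi_2\|_{\mathrm{TV}} \le \sup_{\theta \in B_R} \left| 1 - \frac{g^\infty(\theta)}{g(\theta)} \right|$. -/

import Mathlib

open MeasureTheory

/-- Total variation bound between two normalized densities supported on a common set `B_R`:
`(1/2) ∫ |π₁ - π₂| dμ ≤ sup_{θ ∈ B_R} |1 - g^∞(θ)/g(θ)|`. -/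
theorem stmt_3 {α : Type*} [MeasurableSpace α] (μ : Measure α) (g ginf : α → ℝ)
    (BR : Set α) (hBR : MeasurableSet BR)
    (hg_pos : ∀ θ ∈ BR, 0 < g θ) (hginf_pos : ∀ θ ∈ BR, 0 < ginf θ)
    (hg_zero : ∀ θ ∉ BR, g θ = 0) (hginf_zero : ∀ θ ∉ BR, ginf θ = 0)
    (hg_int : Integrable g μ) (hginf_int : Integrable ginf μ)
    (h1 : 0 < ∫ x in BR, g x ∂μ) (h2 : 0 < ∫ x in BR, ginf x ∂μ)
    (hbdd : BddAbove (Set.range fun θ : BR => |1 - ginf θ / g θ|)) :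
    (1 / 2) * ∫ x, |g x / (∫ y in BR, g y ∂μ) - ginf x / (∫ y in BR, ginf y ∂μ)| ∂μ
      ≤ ⨆ θ : BR, |1 - ginf θ / g θ| := by
  set Z1 := ∫ y in BR, g y ∂μ with hZ1def
  set Z2 := ∫ y in BR, ginf y ∂μ with hZ2def
  set S := ⨆ θ : BR, |1 - ginf θ / g θ| with hSdef
  have hZ1 : (0:ℝ) < Z1 := h1
  have hZ2 : (0:ℝ) < Z2 := h2
  have hne : BR.Nonempty := by
    by_contra h
    rw [Set.not_nonempty_iff_eq_empty] at h
    rw [hZ1def, h] at hZ1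
    simp at hZ1
  obtain ⟨x0, hx0⟩ := hne
  have hS0 : (0:ℝ) ≤ S :=
    le_trans (abs_nonneg _) (le_ciSup hbdd (⟨x0, hx0⟩ : BR))
  have hginfnn : ∀ x, 0 ≤ ginf x := fun x => by
    by_cases hx : x ∈ BR
    · exact (hginf_pos x hx).le
    · exact (hginf_zero x hx).ge
  -- pointwise |g - ginf| ≤ S * g on BR
  have hpt : ∀ x ∈ BR, |g x - ginf x| ≤ S * g x := by
    intro x hx
    have hgx := hg_pos x hx
    have heq : g x - ginf x = (1 - ginf x / g x) * g x := by
      field_simp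
    rw [heq, abs_mul, abs_of_pos hgx]
    exact mul_le_mul_of_nonneg_right (le_ciSup hbdd (⟨x, hx⟩ : BR)) hgx.le
  have hdiffabs : Integrable (fun x => |g x - ginf x|) μ := by
    simpa using (hg_int.sub hginf_int).abs
  -- set integral bound
  have hsetI : ∫ x in BR, |g x - ginf x| ∂μ ≤ S * Z1 := by
    have h1' : ∫ x in BR, |g x - ginf x| ∂μ ≤ ∫ x in BR, S * g x ∂μ := by
      refine setIntegral_mono_on hdiffabs.integrableOn
        (hg_int.integrableOn.const_mul S) hBR hpt
    calc ∫ x in BR, |g x - ginf x| ∂μ ≤ ∫ x in BR, S * g x ∂μ := h1'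
      _ = S * Z1 := by rw [integral_const_mul]
  have htot : ∫ x, |g x - ginf x| ∂μ = ∫ x in BR, |g x - ginf x| ∂μ :=
    (setIntegral_eq_integral_of_forall_compl_eq_zero fun x hx => by
      rw [hg_zero x hx, hginf_zero x hx]; simp).symm
  have htotginf : ∫ x, ginf x ∂μ = Z2 :=
    (setIntegral_eq_integral_of_forall_compl_eq_zero fun x hx =>
      hginf_zero x hx).symm
  have hZdiff : |Z1 - Z2| ≤ S * Z1 := by
    have : Z1 - Z2 = ∫ x in BR, (g x - ginf x) ∂μ := by
      rw [integral_sub hg_int.integrableOn hginf_int.integrableOn]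
    rw [this]
    refine le_trans ?_ hsetI
    simpa [Real.norm_eq_abs] using
      norm_integral_le_integral_norm (μ := μ.restrict BR) (fun x => g x - ginf x)
  -- pointwise bound for the main integrand
  have hpt2 : ∀ x, |g x / Z1 - ginf x / Z2| ≤
      |g x - ginf x| / Z1 + ginf x * (|Z1 - Z2| / (Z1 * Z2)) := by
    intro x
    have hsplit : g x / Z1 - ginf x / Z2
        = (g x - ginf x) / Z1 + ginf x * ((Z2 - Z1) / (Z1 * Z2)) := by
      field_simp
      ring
    rw [hsplit]
    refine (abs_add_le _ _).trans ?_
    have e1 : |(g x - ginf x) / Z1| = |g x - ginf x| / Z1 := by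
      rw [abs_div, abs_of_pos hZ1]
    have e2 : |ginf x * ((Z2 - Z1) / (Z1 * Z2))|
        = ginf x * (|Z1 - Z2| / (Z1 * Z2)) := by
      rw [abs_mul, abs_of_nonneg (hginfnn x), abs_div, abs_sub_comm,
        abs_of_pos (mul_pos hZ1 hZ2)]
    rw [e1, e2]
  -- integrability
  have hint1 : Integrable (fun x => |g x / Z1 - ginf x / Z2|) μ :=
    ((hg_int.div_const Z1).sub (hginf_int.div_const Z2)).abs
  have hint2 : Integrable
      (fun x => |g x - ginf x| / Z1 + ginf x * (|Z1 - Z2| / (Z1 * Z2))) μ :=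
    (hdiffabs.div_const Z1).add (hginf_int.mul_const _)
  have hIb : ∫ x, |g x / Z1 - ginf x / Z2| ∂μ
      ≤ (∫ x, |g x - ginf x| ∂μ) / Z1 + Z2 * (|Z1 - Z2| / (Z1 * Z2)) := by
    have := integral_mono hint1 hint2 hpt2
    rwa [integral_add (hdiffabs.div_const Z1) (hginf_int.mul_const _),
      integral_div, integral_mul_const, htotginf] at this
  have hfinal : ∫ x, |g x / Z1 - ginf x / Z2| ∂μ ≤ 2 * S := by
    have hb1 : (∫ x, |g x - ginf x| ∂μ) / Z1 ≤ S := by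
      rw [htot]
      rw [div_le_iff₀ hZ1]
      exact hsetI
    have hb2 : Z2 * (|Z1 - Z2| / (Z1 * Z2)) ≤ S := by
      have : Z2 * (|Z1 - Z2| / (Z1 * Z2)) ≤ Z2 * ((S * Z1) / (Z1 * Z2)) := by
        gcongr
      refine this.trans (le_of_eq ?_)
      field_simp
    linarith [hIb]
  linarith [hfinal]
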